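/- arXiv:math/9903073 — 2 statements merged into one kernel-verified Lean document; each statement's English description precedes it below -/
import Mathlib

section
/- Let m ≥ 0 be an integer with (m+2)γ > 1. Then for all t ≥ 1, ∫ₜ^∞ s^{-2} h₀(s) N_m(s) ds = P_m(t), where P_m(t) = ∫₁^∞ s^{-γ} h(max(t,s)) h(s)^m ds. -/
open MeasureTheory Real

noncomputable def h0 (γ t : ℝ) : ℝ := ∫ s in (1:ℝ)..t, s ^ (-γ)

noncomputable def hfun (γ t : ℝ) : ℝ := ∫ s in Set.Ioi (1:ℝ), s ^ (-γ) * (max t s)⁻¹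

noncomputable def Nfun (γ : ℝ) (m : ℕ) (t : ℝ) : ℝ := ∫ s in (1:ℝ)..t, s ^ (-γ) * (hfun γ s) ^ m

noncomputable def Qfun (γ : ℝ) (m : ℕ) (t : ℝ) : ℝ :=
  ∫ s in Set.Ioi (1:ℝ), s ^ (-γ) * (max t s)⁻¹ * (hfun γ s) ^ m

noncomputable def Pfun (γ : ℝ) (m : ℕ) (t : ℝ) : ℝ :=
  ∫ s in Set.Ioi (1:ℝ), s ^ (-γ) * hfun γ (max t s) * (hfun γ s) ^ m

noncomputable def Rfun (γ : ℝ) (m : ℕ) (t : ℝ) : ℝ :=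
  ∫ s in Set.Ioi t, s ^ (-2 : ℝ) * Pfun γ m s

/-!
For `t ≥ 1` one has `h(t) = h₀(t)/t + t^{-γ}/γ`, hence `h' = -s⁻²h₀` and `N' = s^{-γ}hᵐ`.
Splitting the integral defining `P` at `s = t` gives `P(t) = h(t)N(t) + ∫ₜ^∞ s^{-γ}h^{m+1}`, and
integrating `∫ₜ^∞ (-h')N` by parts gives the same expression, provided `Nh → 0` at infinity and
both integrals converge. This follows from `h(s) = O(s^{-β})` and `N(s) = O(s^{1-α})` for exponents
with `β ≤ γ`, `β < 1`, `α < 1`, `α ≤ γ + mβ` and `α + β > 1`, which exist since `(m+2)γ > 1`.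
-/

open Set Filter Topology

section Calculus

variable {f : ℝ → ℝ} {a : ℝ}

lemma ContinuousOn.intervalIntegrable_of_Ici (hf : ContinuousOn f (Ici a)) {b : ℝ}
    (hab : a ≤ b) : IntervalIntegrable f volume a b :=
  (hf.mono (uIcc_of_le hab ▸ Icc_subset_Ici_self)).intervalIntegrable

lemma hasDerivAt_integral_of_continuousOn_Ici (hf : ContinuousOn f (Ici a)) {x : ℝ}
    (hx : a < x) : HasDerivAt (fun u => ∫ s in a..u, f s) (f x) x :=
  intervalIntegral.integral_hasDerivAt_right
    (hf.intervalIntegrable_of_Ici hx.le)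
    ((hf.mono Ioi_subset_Ici_self).stronglyMeasurableAtFilter isOpen_Ioi x hx)
    (hf.continuousAt (Ici_mem_nhds hx))

lemma continuousOn_integral_of_continuousOn_Ici (hf : ContinuousOn f (Ici a)) :
    ContinuousOn (fun u => ∫ s in a..u, f s) (Ici a) := by
  intro x hx
  have hax : a ≤ x + 1 := by linarith [hx.out]
  have hint : IntervalIntegrable f volume (min a a) (max a (x + 1)) := by
    rw [min_self, max_eq_right hax]
    exact hf.intervalIntegrable_of_Ici hax
  refine (intervalIntegral.continuousWithinAt_primitive (measure_singleton x) hint)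
    |>.mono_of_mem_nhdsWithin ?_
  rw [← Ici_inter_Iic]
  exact inter_mem_nhdsWithin _ (Iic_mem_nhds (by linarith))

lemma integral_Ioi_mul_max {g : ℝ → ℝ} {t : ℝ} (hat : a ≤ t)
    (hf : IntervalIntegrable f volume a t) (hfg : IntegrableOn (fun s => f s * g s) (Ioi t)) :
    ∫ s in Ioi a, f s * g (max t s) = g t * (∫ s in a..t, f s) + ∫ s in Ioi t, f s * g s := by
  have hIoc : EqOn (fun s => f s * g (max t s)) (fun s => g t * f s) (Ioc a t) := fun s hs => by
    simp only [max_eq_left hs.2, mul_comm]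
  have hIoi : EqOn (fun s => f s * g (max t s)) (fun s => f s * g s) (Ioi t) := fun s hs => by
    simp only [max_eq_right hs.out.le]
  rw [← Ioc_union_Ioi_eq_Ioi hat, setIntegral_union (Ioc_disjoint_Ioi le_rfl) measurableSet_Ioi
      (IntegrableOn.congr_fun (hf.1.const_mul (g t)) hIoc.symm measurableSet_Ioc)
      (hfg.congr_fun hIoi.symm measurableSet_Ioi),
    setIntegral_congr_fun measurableSet_Ioc hIoc, setIntegral_congr_fun measurableSet_Ioi hIoi,
    integral_const_mul, intervalIntegral.integral_of_le hat]

lemma integrableOn_Ioi_of_norm_le_rpow {K p : ℝ} (ha : 0 < a) (hp : p < -1)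
    (hf : ContinuousOn f (Ioi a)) (hbound : ∀ s, a < s → ‖f s‖ ≤ K * s ^ p) :
    IntegrableOn f (Ioi a) :=
  ((integrableOn_Ioi_rpow_of_lt hp ha).const_mul K).mono'
    (hf.aestronglyMeasurable measurableSet_Ioi)
    ((ae_restrict_mem measurableSet_Ioi).mono hbound)

end Calculus

lemma integral_one_rpow_neg_le {α : ℝ} (hα : α < 1) (t : ℝ) :
    ∫ s in (1:ℝ)..t, s ^ (-α) ≤ t ^ (1 - α) / (1 - α) := by
  rw [integral_rpow (Or.inl (by linarith)), one_rpow, neg_add_eq_sub]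
  exact div_le_div_of_nonneg_right (by linarith) (by linarith)

lemma continuousOn_rpow_const_Ici_one (p : ℝ) : ContinuousOn (fun s : ℝ => s ^ p) (Ici 1) :=
  continuousOn_id.rpow_const fun _ hx => Or.inl (zero_lt_one.trans_le hx).ne'

section Kernel

variable {γ : ℝ}

lemma continuousOn_h0 : ContinuousOn (h0 γ) (Ici 1) :=
  continuousOn_integral_of_continuousOn_Ici (continuousOn_rpow_const_Ici_one _)

lemma hasDerivAt_h0 {x : ℝ} (hx : 1 < x) : HasDerivAt (h0 γ) (x ^ (-γ)) x :=
  hasDerivAt_integral_of_continuousOn_Ici (continuousOn_rpow_const_Ici_one _) hx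

lemma h0_nonneg {t : ℝ} (ht : 1 ≤ t) : 0 ≤ h0 γ t :=
  intervalIntegral.integral_nonneg ht fun s hs => rpow_nonneg (by linarith [hs.1]) _

lemma h0_le {β t : ℝ} (hβγ : β ≤ γ) (hβ1 : β < 1) (ht : 1 ≤ t) :
    h0 γ t ≤ t ^ (1 - β) / (1 - β) := by
  refine le_trans ?_ (integral_one_rpow_neg_le hβ1 t)
  refine intervalIntegral.integral_mono_on ht
    ((continuousOn_rpow_const_Ici_one _).intervalIntegrable_of_Ici ht)
    ((continuousOn_rpow_const_Ici_one _).intervalIntegrable_of_Ici ht)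
    fun s hs => rpow_le_rpow_of_exponent_le hs.1 (neg_le_neg hβγ)

lemma hfun_eq (hγ : 0 < γ) {t : ℝ} (ht : 1 ≤ t) :
    hfun γ t = t⁻¹ * h0 γ t + t ^ (-γ) / γ := by
  have ht0 : 0 < t := zero_lt_one.trans_le ht
  have hIoi : EqOn (fun s => s ^ (-γ - 1)) (fun s : ℝ => s ^ (-γ) * s⁻¹) (Ioi t) := fun s hs => by
    simp only [rpow_sub_one (ht0.trans hs).ne', div_eq_mul_inv]
  have htail : ∫ s in Ioi t, s ^ (-γ) * s⁻¹ = t ^ (-γ) / γ := by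
    rw [← setIntegral_congr_fun measurableSet_Ioi hIoi, integral_Ioi_rpow_of_lt (by linarith) ht0,
      sub_add_cancel, neg_div_neg_eq]
  rw [hfun, integral_Ioi_mul_max ht
    ((continuousOn_rpow_const_Ici_one _).intervalIntegrable_of_Ici ht)
    ((integrableOn_Ioi_rpow_of_lt (by linarith) ht0).congr_fun hIoi measurableSet_Ioi), htail]
  rfl

lemma continuousOn_hfun (hγ : 0 < γ) : ContinuousOn (hfun γ) (Ici 1) := by
  refine ContinuousOn.congr ?_ fun t ht => hfun_eq hγ ht
  exact ((continuousOn_inv₀.mono fun t ht => (zero_lt_one.trans_le ht).ne').mul continuousOn_h0).add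
    ((continuousOn_rpow_const_Ici_one _).div_const γ)

lemma hasDerivAt_hfun (hγ : 0 < γ) {x : ℝ} (hx : 1 < x) :
    HasDerivAt (hfun γ) (-(x ^ (-2 : ℝ) * h0 γ x)) x := by
  have hx0 : 0 < x := zero_lt_one.trans hx
  have hderiv := ((hasDerivAt_inv hx0.ne').mul (hasDerivAt_h0 (γ := γ) hx)).add
    ((hasDerivAt_rpow_const (p := -γ) (Or.inl hx0.ne')).div_const γ)
  refine (hderiv.congr_of_eventuallyEq ?_).congr_deriv ?_
  · filter_upwards [Ici_mem_nhds hx] with t ht using hfun_eq hγ ht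
  · rw [rpow_sub_one hx0.ne', show x ^ (-2 : ℝ) = (x ^ 2)⁻¹ by rw [rpow_neg hx0.le, rpow_two]]
    field_simp
    ring

lemma hfun_nonneg (hγ : 0 < γ) {t : ℝ} (ht : 1 ≤ t) : 0 ≤ hfun γ t := by
  have := h0_nonneg (γ := γ) ht
  have := rpow_nonneg (zero_le_one.trans ht) (-γ)
  rw [hfun_eq hγ ht]
  positivity

lemma rpow_neg_two_mul_h0_le (hγ : 0 < γ) {t : ℝ} (ht : 1 ≤ t) :
    t ^ (-2 : ℝ) * h0 γ t ≤ t⁻¹ * hfun γ t := by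
  have ht0 : 0 < t := zero_lt_one.trans_le ht
  have := rpow_nonneg ht0.le (-γ)
  rw [hfun_eq hγ ht, rpow_neg ht0.le, rpow_two, sq, mul_add, ← mul_assoc, ← mul_inv]
  exact le_add_of_nonneg_right (by positivity)

lemma hfun_le {β t : ℝ} (hγ : 0 < γ) (hβγ : β ≤ γ) (hβ1 : β < 1) (ht : 1 ≤ t) :
    hfun γ t ≤ ((1 - β)⁻¹ + γ⁻¹) * t ^ (-β) := by
  have ht0 : 0 < t := zero_lt_one.trans_le ht
  have hh0 : t⁻¹ * h0 γ t ≤ (1 - β)⁻¹ * t ^ (-β) := by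
    calc t⁻¹ * h0 γ t ≤ t⁻¹ * (t ^ (1 - β) / (1 - β)) := by
          gcongr; exact h0_le hβγ hβ1 ht
      _ = (1 - β)⁻¹ * t ^ (-β) := by
          rw [sub_eq_neg_add, rpow_add_one ht0.ne']; field_simp
  have htail : t ^ (-γ) / γ ≤ γ⁻¹ * t ^ (-β) := by
    rw [div_eq_inv_mul]
    gcongr
  rw [hfun_eq hγ ht, add_mul]
  exact add_le_add hh0 htail

end Kernel

section Moments

variable {γ β : ℝ} {m : ℕ}

lemma continuousOn_rpow_mul_hfun_pow (hγ : 0 < γ) (k : ℕ) :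
    ContinuousOn (fun s : ℝ => s ^ (-γ) * hfun γ s ^ k) (Ici 1) :=
  (continuousOn_rpow_const_Ici_one _).mul ((continuousOn_hfun hγ).pow k)

lemma continuousOn_Nfun (hγ : 0 < γ) : ContinuousOn (Nfun γ m) (Ici 1) :=
  continuousOn_integral_of_continuousOn_Ici (continuousOn_rpow_mul_hfun_pow hγ m)

lemma hasDerivAt_Nfun (hγ : 0 < γ) {x : ℝ} (hx : 1 < x) :
    HasDerivAt (Nfun γ m) (x ^ (-γ) * hfun γ x ^ m) x :=
  hasDerivAt_integral_of_continuousOn_Ici (continuousOn_rpow_mul_hfun_pow hγ m) hx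

lemma Nfun_nonneg (hγ : 0 < γ) {t : ℝ} (ht : 1 ≤ t) : 0 ≤ Nfun γ m t :=
  intervalIntegral.integral_nonneg ht fun s hs =>
    mul_nonneg (rpow_nonneg (by linarith [hs.1]) _) (pow_nonneg (hfun_nonneg hγ hs.1) m)

lemma rpow_mul_hfun_pow_le (hγ : 0 < γ) (hβγ : β ≤ γ) (hβ1 : β < 1) (k : ℕ) {s : ℝ}
    (hs : 1 ≤ s) :
    s ^ (-γ) * hfun γ s ^ k ≤ ((1 - β)⁻¹ + γ⁻¹) ^ k * s ^ (-(γ + k * β)) := by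
  have hs0 : 0 < s := zero_lt_one.trans_le hs
  calc s ^ (-γ) * hfun γ s ^ k ≤ s ^ (-γ) * (((1 - β)⁻¹ + γ⁻¹) * s ^ (-β)) ^ k := by
        gcongr
        · exact hfun_nonneg hγ hs
        · exact hfun_le hγ hβγ hβ1 hs
    _ = ((1 - β)⁻¹ + γ⁻¹) ^ k * s ^ (-(γ + k * β)) := by
        rw [mul_pow, ← rpow_natCast (s ^ (-β)), ← rpow_mul hs0.le, neg_add, rpow_add hs0]
        ring_nf

lemma Nfun_le {α : ℝ} (hγ : 0 < γ) (hβγ : β ≤ γ) (hβ1 : β < 1) (hα1 : α < 1)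
    (hαm : α ≤ γ + m * β) {t : ℝ} (ht : 1 ≤ t) :
    Nfun γ m t ≤ ((1 - β)⁻¹ + γ⁻¹) ^ m * (t ^ (1 - α) / (1 - α)) := by
  have hC : 0 ≤ (1 - β)⁻¹ + γ⁻¹ := by
    have : 0 < 1 - β := by linarith
    positivity
  calc Nfun γ m t ≤ ∫ s in (1:ℝ)..t, ((1 - β)⁻¹ + γ⁻¹) ^ m * s ^ (-α) := by
        refine intervalIntegral.integral_mono_on ht
          ((continuousOn_rpow_mul_hfun_pow hγ m).intervalIntegrable_of_Ici ht)
          (((continuousOn_rpow_const_Ici_one _).intervalIntegrable_of_Ici ht).const_mul _)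
          fun s hs => (rpow_mul_hfun_pow_le hγ hβγ hβ1 m hs.1).trans ?_
        gcongr
        exact hs.1
    _ ≤ ((1 - β)⁻¹ + γ⁻¹) ^ m * (t ^ (1 - α) / (1 - α)) := by
        rw [intervalIntegral.integral_const_mul]
        gcongr
        exact integral_one_rpow_neg_le hα1 t

lemma exists_Nfun_mul_hfun_le {α : ℝ} (hγ : 0 < γ) (hβγ : β ≤ γ) (hβ1 : β < 1) (hα1 : α < 1)
    (hαm : α ≤ γ + m * β) :
    ∃ K, ∀ t, 1 ≤ t → Nfun γ m t * hfun γ t ≤ K * t ^ (1 - α - β) := by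
  refine ⟨((1 - β)⁻¹ + γ⁻¹) ^ (m + 1) / (1 - α), fun t ht => ?_⟩
  have ht0 : 0 < t := zero_lt_one.trans_le ht
  have hα : 0 < 1 - α := by linarith
  have hβ : 0 < 1 - β := by linarith
  calc Nfun γ m t * hfun γ t
      ≤ ((1 - β)⁻¹ + γ⁻¹) ^ m * (t ^ (1 - α) / (1 - α)) * (((1 - β)⁻¹ + γ⁻¹) * t ^ (-β)) :=
        mul_le_mul (Nfun_le hγ hβγ hβ1 hα1 hαm ht) (hfun_le hγ hβγ hβ1 ht)
          (hfun_nonneg hγ ht) (by positivity)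
    _ = ((1 - β)⁻¹ + γ⁻¹) ^ (m + 1) / (1 - α) * t ^ (1 - α - β) := by
        rw [sub_eq_add_neg (1 - α) β, rpow_add ht0]
        ring

end Moments

section Asymptotics

variable {γ β α : ℝ} {m : ℕ}

lemma integrableOn_rpow_mul_hfun_pow (hγ : 0 < γ) (hβγ : β ≤ γ) (hβ1 : β < 1) {k : ℕ}
    (hk : 1 < γ + k * β) :
    IntegrableOn (fun s : ℝ => s ^ (-γ) * hfun γ s ^ k) (Ioi 1) := by
  refine integrableOn_Ioi_of_norm_le_rpow (K := ((1 - β)⁻¹ + γ⁻¹) ^ k) one_pos (neg_lt_neg hk)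
    ((continuousOn_rpow_mul_hfun_pow hγ k).mono Ioi_subset_Ici_self) fun s hs => ?_
  have hs1 : 1 ≤ s := hs.le
  rw [norm_of_nonneg (mul_nonneg (rpow_nonneg (by linarith) _) (pow_nonneg (hfun_nonneg hγ hs1) k))]
  exact rpow_mul_hfun_pow_le hγ hβγ hβ1 k hs1

lemma integrableOn_rpow_neg_two_mul_h0_mul_Nfun (hγ : 0 < γ) (hβγ : β ≤ γ) (hβ1 : β < 1)
    (hα1 : α < 1) (hαm : α ≤ γ + m * β) (hαβ : 1 < α + β) :
    IntegrableOn (fun s : ℝ => s ^ (-2 : ℝ) * h0 γ s * Nfun γ m s) (Ioi 1) := by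
  obtain ⟨K, hK⟩ := exists_Nfun_mul_hfun_le hγ hβγ hβ1 hα1 hαm
  have hcont : ContinuousOn (fun s : ℝ => s ^ (-2 : ℝ) * h0 γ s * Nfun γ m s) (Ioi 1) :=
    (((continuousOn_rpow_const_Ici_one _).mul continuousOn_h0).mul
      (continuousOn_Nfun hγ)).mono Ioi_subset_Ici_self
  refine integrableOn_Ioi_of_norm_le_rpow (K := K) one_pos (by linarith : -(α + β) < -1) hcont
    fun s hs => ?_
  have hs1 : 1 ≤ s := hs.le
  have hs0 : 0 < s := zero_lt_one.trans hs
  have hN := Nfun_nonneg (m := m) hγ hs1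
  rw [norm_of_nonneg (mul_nonneg (mul_nonneg (rpow_nonneg hs0.le _) (h0_nonneg hs1)) hN)]
  calc s ^ (-2 : ℝ) * h0 γ s * Nfun γ m s ≤ s⁻¹ * hfun γ s * Nfun γ m s :=
        mul_le_mul_of_nonneg_right (rpow_neg_two_mul_h0_le hγ hs1) hN
    _ = s⁻¹ * (Nfun γ m s * hfun γ s) := by ring
    _ ≤ s⁻¹ * (K * s ^ (1 - α - β)) := mul_le_mul_of_nonneg_left (hK s hs1) (by positivity)
    _ = K * s ^ (-(α + β)) := by
        rw [show -(α + β) = 1 - α - β - 1 by ring, rpow_sub_one hs0.ne']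
        ring

lemma tendsto_Nfun_mul_hfun_atTop (hγ : 0 < γ) (hβγ : β ≤ γ) (hβ1 : β < 1) (hα1 : α < 1)
    (hαm : α ≤ γ + m * β) (hαβ : 1 < α + β) :
    Tendsto (fun t => Nfun γ m t * hfun γ t) atTop (𝓝 0) := by
  obtain ⟨K, hK⟩ := exists_Nfun_mul_hfun_le hγ hβγ hβ1 hα1 hαm
  have hdecay : Tendsto (fun t : ℝ => K * t ^ (1 - α - β)) atTop (𝓝 0) := by
    simpa only [mul_zero, show -(α + β - 1) = 1 - α - β by ring] using
      (tendsto_rpow_neg_atTop (by linarith : 0 < α + β - 1)).const_mul K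
  refine squeeze_zero' ?_ ?_ hdecay
  · filter_upwards [eventually_ge_atTop 1] with t ht
      using mul_nonneg (Nfun_nonneg hγ ht) (hfun_nonneg hγ ht)
  · filter_upwards [eventually_ge_atTop 1] with t ht using hK t ht

end Asymptotics

lemma Pfun_eq {γ t : ℝ} {m : ℕ} (hγ : 0 < γ) (ht : 1 ≤ t)
    (hint : IntegrableOn (fun s : ℝ => s ^ (-γ) * hfun γ s ^ m * hfun γ s) (Ioi 1)) :
    Pfun γ m t = hfun γ t * Nfun γ m t + ∫ s in Ioi t, s ^ (-γ) * hfun γ s ^ m * hfun γ s := by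
  rw [Pfun, Nfun, ← integral_Ioi_mul_max ht
    ((continuousOn_rpow_mul_hfun_pow hγ m).intervalIntegrable_of_Ici ht)
    (hint.mono_set (Ioi_subset_Ioi ht))]
  congr 1 with s
  ring

lemma exists_decay_exponents {γ : ℝ} {m : ℕ} (hγ1 : γ ≤ 1) (hm : 1 < ((m : ℝ) + 2) * γ) :
    ∃ α β : ℝ, β ≤ γ ∧ β < 1 ∧ α < 1 ∧ α ≤ γ + m * β ∧ 1 < α + β := by
  have hm1 : (0 : ℝ) < m + 1 := by positivity
  obtain ⟨β, hβlo, hβγ⟩ : ∃ β, (1 - γ) / (m + 1) < β ∧ β < γ :=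
    exists_between ((div_lt_iff₀ hm1).2 (by linarith))
  have hβ : 1 - β < γ + m * β := by
    have := (div_lt_iff₀ hm1).1 hβlo
    linarith
  have hβ0 : 0 < β := (div_nonneg (by linarith) hm1.le).trans_lt hβlo
  obtain ⟨α, hαlo, hαhi⟩ := exists_between (lt_min (by linarith : 1 - β < 1) hβ)
  exact ⟨α, β, hβγ.le, hβγ.trans_le hγ1, hαhi.trans_le (min_le_left _ _),
    hαhi.le.trans (min_le_right _ _), by linarith⟩

lemma integral_Ioi_rpow_neg_two_mul_h0_mul_Nfun {γ t : ℝ} {m : ℕ} (hγ : 0 < γ) (ht : 1 ≤ t)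
    (hu'v : IntegrableOn (fun s : ℝ => s ^ (-γ) * hfun γ s ^ m * hfun γ s) (Ioi 1))
    (huv' : IntegrableOn (fun s : ℝ => s ^ (-2 : ℝ) * h0 γ s * Nfun γ m s) (Ioi 1))
    (hlim : Tendsto (fun s => Nfun γ m s * hfun γ s) atTop (𝓝 0)) :
    ∫ s in Ioi t, s ^ (-2 : ℝ) * h0 γ s * Nfun γ m s
      = hfun γ t * Nfun γ m t + ∫ s in Ioi t, s ^ (-γ) * hfun γ s ^ m * hfun γ s := by
  have hNh : ContinuousWithinAt (fun s => Nfun γ m s * hfun γ s) (Ioi t) t :=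
    ((continuousOn_Nfun hγ t ht).mul (continuousOn_hfun hγ t ht)).mono
      (Ioi_subset_Ici_self.trans (Ici_subset_Ici.2 ht))
  have hparts := integral_Ioi_mul_deriv_eq_deriv_mul
    (fun x hx => hasDerivAt_Nfun hγ (ht.trans_lt hx))
    (fun x hx => hasDerivAt_hfun hγ (ht.trans_lt hx))
    ((huv'.mono_set (Ioi_subset_Ioi ht)).neg.congr_fun (fun s _ => by
      simp only [Pi.neg_apply, Pi.mul_apply]; ring) measurableSet_Ioi)
    (hu'v.mono_set (Ioi_subset_Ioi ht)) hNh.tendsto hlim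
  have hneg : ∫ s in Ioi t, Nfun γ m s * -(s ^ (-2 : ℝ) * h0 γ s)
      = -∫ s in Ioi t, s ^ (-2 : ℝ) * h0 γ s * Nfun γ m s := by
    rw [← integral_neg]
    congr 1 with s
    ring
  linarith

theorem stmt_10 (γ t : ℝ) (hγ : 0 < γ) (hγ1 : γ ≤ 1) (ht : 1 ≤ t) (m : ℕ)
    (hm : 1 < ((m : ℝ) + 2) * γ) :
    (∫ s in Set.Ioi t, s ^ (-2 : ℝ) * h0 γ s * Nfun γ m s) = Pfun γ m t := by
  obtain ⟨α, β, hβγ, hβ1, hα1, hαm, hαβ⟩ := exists_decay_exponents hγ1 hm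
  have hint : IntegrableOn (fun s : ℝ => s ^ (-γ) * hfun γ s ^ m * hfun γ s) (Ioi 1) := by
    simpa only [pow_succ, mul_assoc] using
      integrableOn_rpow_mul_hfun_pow hγ hβγ hβ1 (k := m + 1) (by push_cast; linarith)
  rw [Pfun_eq hγ ht hint, integral_Ioi_rpow_neg_two_mul_h0_mul_Nfun hγ ht hint
    (integrableOn_rpow_neg_two_mul_h0_mul_Nfun hγ hβγ hβ1 hα1 hαm hαβ)
    (tendsto_Nfun_mul_hfun_atTop hγ hβγ hβ1 hα1 hαm hαβ)]
end

section
/- For every nonnegative integer m and all t ≥ 1, ∫₁ᵗ s^{-γ} Q_m(s) ds ≤ N_{m+1}(t), where Q_m(t) = ∫₁^∞ s^{-γ}(max(t,s))^{-1} h(s)^m ds and N_m(t) = ∫₁ᵗ s^{-γ} h(s)^m ds. -/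
/-! With the symmetric kernel `K(s, u) = s^{-γ} u^{-γ} / max(s, u)` and `w = h^m`, Fubini turns
the left side into `∬_{[1,t] × [1,∞)} K(s, u) w(u)` and the right side into the same integral of
`K(s, u) w(s)`. On the square `[1, t]²` the two agree by the symmetry of `K`; on
`[1, t] × (t, ∞)` we have `u > s`, hence `w(u) ≤ w(s)` because `h` is nonincreasing. -/

open MeasureTheory Real

open Set

theorem setIntegral_prod_mul_le_of_symm {α : Type*} [MeasurableSpace α] {μ : Measure α}
    [SFinite μ] {k : α → α → ℝ} {w : α → ℝ} {I T : Set α}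
    (hI : MeasurableSet I) (hT : MeasurableSet T) (hIT : Disjoint I T)
    (hk : ∀ x y, k x y = k y x) (hk0 : ∀ x ∈ I, ∀ y ∈ T, 0 ≤ k x y)
    (hw : ∀ x ∈ I, ∀ y ∈ T, w y ≤ w x)
    (hint₂ : IntegrableOn (fun z : α × α => k z.1 z.2 * w z.2) (I ×ˢ (I ∪ T)) (μ.prod μ))
    (hint₁ : IntegrableOn (fun z : α × α => k z.1 z.2 * w z.1) (I ×ˢ (I ∪ T)) (μ.prod μ)) :
    ∫ z in I ×ˢ (I ∪ T), k z.1 z.2 * w z.2 ∂μ.prod μ ≤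
      ∫ z in I ×ˢ (I ∪ T), k z.1 z.2 * w z.1 ∂μ.prod μ := by
  have hdisj : Disjoint (I ×ˢ I) (I ×ˢ T) := disjoint_prod.2 (Or.inr hIT)
  have hIT' : MeasurableSet (I ×ˢ T) := hI.prod hT
  rw [prod_union] at hint₁ hint₂ ⊢
  rw [setIntegral_union hdisj hIT' (hint₂.mono_set subset_union_left)
      (hint₂.mono_set subset_union_right),
    setIntegral_union hdisj hIT' (hint₁.mono_set subset_union_left)
      (hint₁.mono_set subset_union_right)]
  have hdiag : ∫ z in I ×ˢ I, k z.1 z.2 * w z.2 ∂μ.prod μ =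
      ∫ z in I ×ˢ I, k z.1 z.2 * w z.1 ∂μ.prod μ := by
    rw [← setIntegral_prod_swap]
    simp only [Prod.fst_swap, Prod.snd_swap, hk]
  refine add_le_add hdiag.le (setIntegral_mono_on (hint₂.mono_set subset_union_right)
    (hint₁.mono_set subset_union_right) hIT' fun z hz => ?_)
  exact mul_le_mul_of_nonneg_left (hw _ hz.1 _ hz.2) (hk0 _ hz.1 _ hz.2)

theorem hfun_nonneg_s14 (γ u : ℝ) : 0 ≤ hfun γ u :=
  setIntegral_nonneg measurableSet_Ioi fun s hs => by
    have : (0 : ℝ) < s := one_pos.trans hs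
    positivity

variable {γ : ℝ}

theorem rpow_neg_mul_inv_max_le (u : ℝ) {s : ℝ} (hs : 0 < s) :
    s ^ (-γ) * (max u s)⁻¹ ≤ s ^ (-γ - 1) := by
  calc s ^ (-γ) * (max u s)⁻¹ ≤ s ^ (-γ) * s⁻¹ := by gcongr; exact le_max_right u s
    _ = s ^ (-γ - 1) := by rw [rpow_sub hs, rpow_one, div_eq_mul_inv]

theorem integrableOn_Ioi_rpow_neg_mul_inv_max (hγ : 0 < γ) (u : ℝ) :
    IntegrableOn (fun s : ℝ => s ^ (-γ) * (max u s)⁻¹) (Ioi 1) := by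
  refine (integrableOn_Ioi_rpow_of_lt (a := -γ - 1) (by linarith) one_pos).mono'
    (by fun_prop) ?_
  filter_upwards [ae_restrict_mem measurableSet_Ioi] with s hs
  have hs0 : (0 : ℝ) < s := one_pos.trans hs
  rw [Real.norm_of_nonneg (by positivity)]
  exact rpow_neg_mul_inv_max_le u hs0

theorem hfun_antitone (hγ : 0 < γ) : Antitone (hfun γ) := fun u v huv =>
  setIntegral_mono_on (integrableOn_Ioi_rpow_neg_mul_inv_max hγ v)
    (integrableOn_Ioi_rpow_neg_mul_inv_max hγ u) measurableSet_Ioi fun s hs => by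
      have : (0 : ℝ) < s := one_pos.trans hs
      gcongr

theorem integrableOn_Ioc_prod_Ioi_rpow_mul_rpow_mul_inv_max (hγ : 0 < γ) (t : ℝ) :
    IntegrableOn (fun z : ℝ × ℝ => z.1 ^ (-γ) * z.2 ^ (-γ) * (max z.1 z.2)⁻¹)
      (Ioc 1 t ×ˢ Ioi 1) (volume.prod volume) := by
  rw [IntegrableOn, ← Measure.prod_restrict]
  refine Integrable.mono' ((integrable_const (1 : ℝ)).mul_prod
    (integrableOn_Ioi_rpow_of_lt (a := -γ - 1) (by linarith) one_pos))
    (by fun_prop) ?_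
  rw [Measure.prod_restrict]
  filter_upwards [ae_restrict_mem (measurableSet_Ioc.prod measurableSet_Ioi)] with z hz
  have hs : 1 ≤ z.1 := hz.1.1.le
  have hu : 0 < z.2 := one_pos.trans hz.2
  rw [Real.norm_of_nonneg (by positivity), mul_assoc]
  exact mul_le_mul (rpow_le_one_of_one_le_of_nonpos hs (by linarith))
    (rpow_neg_mul_inv_max_le _ hu) (by positivity) zero_le_one

theorem setIntegral_Ioc_rpow_mul_integral_le (hγ : 0 < γ) {w : ℝ → ℝ} (hw : Antitone w)
    (hw0 : ∀ x, 0 ≤ w x) {t : ℝ} (ht : 1 ≤ t) :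
    ∫ s in Ioc 1 t, s ^ (-γ) * ∫ u in Ioi 1, u ^ (-γ) * (max s u)⁻¹ * w u ≤
      ∫ s in Ioc 1 t, s ^ (-γ) * hfun γ s * w s := by
  set k : ℝ → ℝ → ℝ := fun s u => s ^ (-γ) * u ^ (-γ) * (max s u)⁻¹ with hk
  have hint_of_one_le : ∀ i : ℝ × ℝ → ℝ, Measurable i → (∀ z ∈ Ioc 1 t ×ˢ Ioi 1, 1 ≤ i z) →
      IntegrableOn (fun z => k z.1 z.2 * w (i z)) (Ioc 1 t ×ˢ Ioi 1) (volume.prod volume) := by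
    intro i hi hi1
    refine (integrableOn_Ioc_prod_Ioi_rpow_mul_rpow_mul_inv_max hγ t).mul_bdd (c := w 1)
      (hw.measurable.comp hi).aestronglyMeasurable ?_
    filter_upwards [ae_restrict_mem (measurableSet_Ioc.prod measurableSet_Ioi)] with z hz
    rw [Real.norm_of_nonneg (hw0 _)]
    exact hw (hi1 z hz)
  have hint₂ := hint_of_one_le Prod.snd measurable_snd fun z hz => le_of_lt hz.2
  have hint₁ := hint_of_one_le Prod.fst measurable_fst fun z hz => hz.1.1.le
  have key := setIntegral_prod_mul_le_of_symm (μ := volume) (k := k) (w := w)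
    (I := Ioc 1 t) (T := Ioi t) measurableSet_Ioc measurableSet_Ioi (Ioc_disjoint_Ioi le_rfl)
    (fun s u => by simp only [hk, max_comm s u]; ring)
    (fun s hs u hu => by
      have : 0 < s := one_pos.trans hs.1
      have : 0 < u := this.trans (hs.2.trans_lt hu)
      positivity)
    (fun s hs u hu => hw (hs.2.trans hu.le))
    (by rwa [Ioc_union_Ioi_eq_Ioi ht]) (by rwa [Ioc_union_Ioi_eq_Ioi ht])
  rw [Ioc_union_Ioi_eq_Ioi ht, ← Measure.prod_restrict] at key
  rw [IntegrableOn, ← Measure.prod_restrict] at hint₁ hint₂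
  rw [integral_prod _ hint₂, integral_prod _ hint₁] at key
  calc ∫ s in Ioc 1 t, s ^ (-γ) * ∫ u in Ioi 1, u ^ (-γ) * (max s u)⁻¹ * w u
      = ∫ s in Ioc 1 t, ∫ u in Ioi 1, k s u * w u := by
        congr 1 with s
        rw [← integral_const_mul]
        congr 1 with u
        simp only [hk]
        ring
    _ ≤ ∫ s in Ioc 1 t, ∫ u in Ioi 1, k s u * w s := key
    _ = ∫ s in Ioc 1 t, s ^ (-γ) * hfun γ s * w s := by
        congr 1 with s
        rw [hfun, ← integral_const_mul, ← integral_mul_const]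
        congr 1 with u
        simp only [hk]
        ring

theorem stmt_14_general (γ t : ℝ) (hγ : 0 < γ) (ht : 1 ≤ t) (m : ℕ) :
    (∫ s in (1:ℝ)..t, s ^ (-γ) * Qfun γ m s) ≤ Nfun γ (m + 1) t := by
  have hw : Antitone fun s => hfun γ s ^ m := fun u v huv =>
    pow_le_pow_left₀ (hfun_nonneg_s14 γ v) (hfun_antitone hγ huv) m
  rw [Nfun, intervalIntegral.integral_of_le ht, intervalIntegral.integral_of_le ht]
  simpa only [Qfun, pow_succ', ← mul_assoc] using
    setIntegral_Ioc_rpow_mul_integral_le hγ hw (fun s => pow_nonneg (hfun_nonneg_s14 γ s) m) ht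

theorem stmt_14 (γ t : ℝ) (hγ : 0 < γ) (hγ1 : γ ≤ 1) (ht : 1 ≤ t) (m : ℕ) :
    (∫ s in (1:ℝ)..t, s ^ (-γ) * Qfun γ m s) ≤ Nfun γ (m + 1) t :=
  stmt_14_general γ t hγ ht m
end
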